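/- Let (V,μ,ν) be a weighted graph with V nonempty that is uniformly locally finite with constant C₁ > 0 and has finite measure, ν(V) := ∑_{v∈V} ν(v) < ∞. Then for every real d > 1 the graph satisfies no d-isoperimetric inequality: for every constant C > 0 there exists a finite subset V₀ ⊆ V with (∑_{v∈V₀} ν(v))^{(d−1)/d} > C ∑_{v∈V₀, w∈V∖V₀} μ(v,w). -/
import Mathlib


/-- finite-measure uniformly locally finite graphs satisfy no
isoperimetric inequality. Let `(V,μ,ν)` be a nonempty weighted graph, uniformly
locally finite with constant `C₁ > 0` and of finite measure `∑_v ν(v) < ∞`. Then for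
every `d > 1` and every `C > 0` there is a finite `V₀ ⊆ V` with
`(∑_{v∈V₀} ν(v))^{(d−1)/d} > C ∑_{v∈V₀, w∉V₀} μ(v,w)`. -/
theorem stmt16 {V : Type*} [Countable V] [DecidableEq V] [Nonempty V]
    (μ : V → V → ℝ) (ν : V → ℝ)
    (hμsymm : ∀ v w, μ v w = μ w v) (hμnn : ∀ v w, 0 ≤ μ v w) (hμdiag : ∀ v, μ v v = 0)
    (hν : ∀ v, 0 < ν v) (hloc : ∀ v, Summable (fun w => μ v w))
    (C₁ : ℝ) (hC₁ : 0 < C₁) (hulf : ∀ v, C₁ * ∑' w, μ v w ≤ ν v)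
    (hfinmeas : Summable ν) :
    ∀ d : ℝ, 1 < d → ∀ C : ℝ, 0 < C → ∃ V₀ : Finset V,
      (∑ v ∈ V₀, ν v) ^ ((d - 1) / d) >
        C * ∑ v ∈ V₀, ∑' w, (if w ∈ V₀ then 0 else μ v w) := by
  intro d hd C hC
  set f : V → ℝ := fun v => ∑' w, μ v w with hfdef
  have hf_nn : ∀ v, 0 ≤ f v := fun v => tsum_nonneg (fun w => hμnn v w)
  have hf_le : ∀ v, f v ≤ ν v / C₁ := fun v => by
    rw [le_div_iff₀ hC₁, mul_comm]; exact hulf v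
  have hf_sum : Summable f :=
    Summable.of_nonneg_of_le hf_nn hf_le (hfinmeas.div_const C₁)
  obtain ⟨v₀⟩ := ‹Nonempty V›
  have hν0 : 0 < ν v₀ := hν v₀
  have he : 0 < (d - 1) / d := by
    apply div_pos <;> linarith
  have hε : 0 < ν v₀ ^ ((d - 1) / d) / C := by positivity
  have htend := tendsto_tsum_compl_atTop_zero f
  have h2 : ∀ᶠ s : Finset V in Filter.atTop,
      (∑' x : {x // x ∉ s}, f x) < ν v₀ ^ ((d - 1) / d) / C :=
    htend.eventually_lt_const hε
  obtain ⟨F, hF⟩ := Filter.eventually_atTop.mp h2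
  refine ⟨insert v₀ F, ?_⟩
  set V₀ : Finset V := insert v₀ F with hV₀
  have hmem : v₀ ∈ V₀ := Finset.mem_insert_self _ _
  have htail : (∑' x : {x // x ∉ V₀}, f x) < ν v₀ ^ ((d - 1) / d) / C :=
    hF V₀ (Finset.subset_insert _ _)
  -- summability of inner functions
  have hinner : ∀ v, Summable (fun w => if w ∈ V₀ then 0 else μ v w) := by
    intro v
    refine Summable.of_nonneg_of_le (fun w => ?_) (fun w => ?_) (hloc v)
    · split <;> [exact le_refl 0; exact hμnn v w]
    · split <;> [exact hμnn v w; exact le_refl _]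
  have hswap : ∑ v ∈ V₀, ∑' w, (if w ∈ V₀ then 0 else μ v w)
      = ∑' w, ∑ v ∈ V₀, (if w ∈ V₀ then 0 else μ v w) :=
    (Summable.tsum_finsetSum (fun v _ => hinner v)).symm
  -- bound the boundary
  have hμcol : ∀ w, Summable (fun v => μ v w) := by
    intro w
    have := hloc w
    simpa [hμsymm] using this
  have hbound : ∑' w, ∑ v ∈ V₀, (if w ∈ V₀ then 0 else μ v w)
      ≤ ∑' w, Set.indicator {x | x ∉ V₀} f w := by
    refine Summable.tsum_le_tsum (fun w => ?_) ?_ (hf_sum.indicator _)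
    · by_cases hw : w ∈ V₀
      · simp [hw, Set.indicator_apply]
      · simp only [hw, if_false, Set.indicator_apply, Set.mem_setOf_eq, hw,
          not_false_iff, if_true]
        calc ∑ v ∈ V₀, μ v w ≤ ∑' v, μ v w :=
              Summable.sum_le_tsum V₀ (fun v _ => hμnn v w) (hμcol w)
          _ = f w := by
              rw [hfdef]; exact tsum_congr (fun v => hμsymm v w)
    · exact summable_sum (fun v _ => hinner v)
  have hsub : ∑' w, Set.indicator {x | x ∉ V₀} f w = ∑' x : {x // x ∉ V₀}, f x :=
    (tsum_subtype {x | x ∉ V₀} f).symm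
  have hB : ∑ v ∈ V₀, ∑' w, (if w ∈ V₀ then 0 else μ v w)
      < ν v₀ ^ ((d - 1) / d) / C := by
    rw [hswap]
    calc ∑' w, ∑ v ∈ V₀, (if w ∈ V₀ then 0 else μ v w)
        ≤ ∑' w, Set.indicator {x | x ∉ V₀} f w := hbound
      _ = ∑' x : {x // x ∉ V₀}, f x := hsub
      _ < _ := htail
  have hpow : ν v₀ ^ ((d - 1) / d) ≤ (∑ v ∈ V₀, ν v) ^ ((d - 1) / d) := by
    apply Real.rpow_le_rpow (le_of_lt hν0) _ (le_of_lt he)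
    exact Finset.single_le_sum (fun v _ => (hν v).le) hmem
  calc C * ∑ v ∈ V₀, ∑' w, (if w ∈ V₀ then 0 else μ v w)
      < C * (ν v₀ ^ ((d - 1) / d) / C) := by
        exact mul_lt_mul_of_pos_left hB hC
    _ = ν v₀ ^ ((d - 1) / d) := by field_simp
    _ ≤ (∑ v ∈ V₀, ν v) ^ ((d - 1) / d) := hpow
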